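/- The function κ ↦ √(1+κ²)·K(κ) is strictly increasing on [0,1), takes the value π/2 at κ = 0, and tends to +∞ as κ → 1⁻. Consequently, for every γ̃ ∈ (0,1] there is a unique κ ∈ [0,1) satisfying γ̃ = π² / (4 K(κ)² (1+κ²)). -/

import Mathlib

/-!
`K` is strictly increasing on `[0, 1)` (its integrand is, pointwise in `t`), hence so is
`√(1 + κ²) K(κ)`. It blows up at `1` because `1 - κ² sin² t = (1 - κ²) + κ² cos² t` is at most
`(1 - κ²) + (π/2 - t)²`, whose inverse square root integrates to `arsinh (π / (2√(1 - κ²)))`.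
The equation `γ̃ = π² / (4 K(κ)² (1 + κ²))` says `√(1 + κ²) K(κ) = π / (2√γ̃) ≥ π/2`, which
has exactly one solution by the intermediate value theorem and strict monotonicity.
-/

open Real Set Filter Topology intervalIntegral

/-- Complete elliptic integral of the first kind,
`K(κ) = ∫₀^{π/2} (1 − κ² sin²t)^{−1/2} dt`. -/
noncomputable def ellK (κ : ℝ) : ℝ :=
  ∫ t in (0:ℝ)..(Real.pi/2), 1 / Real.sqrt (1 - κ^2 * Real.sin t ^ 2)

/-- Complete elliptic integral of the second kind,
`E(κ) = ∫₀^{π/2} (1 − κ² sin²t)^{1/2} dt`. -/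
noncomputable def ellE (κ : ℝ) : ℝ :=
  ∫ t in (0:ℝ)..(Real.pi/2), Real.sqrt (1 - κ^2 * Real.sin t ^ 2)

lemma one_sub_sq_mul_sin_sq_pos {κ : ℝ} (hκ : κ ^ 2 < 1) (t : ℝ) :
    0 < 1 - κ ^ 2 * sin t ^ 2 := by
  nlinarith [mul_le_of_le_one_right (sq_nonneg κ) (sin_sq_le_one t)]

lemma continuous_ellK_integrand {κ : ℝ} (hκ : κ ^ 2 < 1) :
    Continuous fun t : ℝ => 1 / √(1 - κ ^ 2 * sin t ^ 2) :=
  continuous_const.div (by fun_prop) fun t => (sqrt_pos.2 (one_sub_sq_mul_sin_sq_pos hκ t)).ne'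

lemma ellK_zero : ellK 0 = π / 2 := by
  simp [ellK]

lemma pi_div_two_le_ellK {κ : ℝ} (hκ : κ ^ 2 < 1) : π / 2 ≤ ellK κ := by
  have hle : ∀ t ∈ Icc 0 (π / 2), (1 : ℝ) ≤ 1 / √(1 - κ ^ 2 * sin t ^ 2) := fun t _ => by
    rw [le_div_iff₀ (sqrt_pos.2 (one_sub_sq_mul_sin_sq_pos hκ t)), one_mul, sqrt_le_one]
    nlinarith [sq_nonneg (κ * sin t)]
  calc π / 2 = ∫ _ in (0 : ℝ)..π / 2, (1 : ℝ) := by simp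
    _ ≤ ellK κ := integral_mono_on (by positivity) intervalIntegrable_const
        ((continuous_ellK_integrand hκ).intervalIntegrable _ _) hle

lemma ellK_pos {κ : ℝ} (hκ : κ ^ 2 < 1) : 0 < ellK κ :=
  (by positivity : (0 : ℝ) < π / 2).trans_le (pi_div_two_le_ellK hκ)

lemma ellK_strictMonoOn : StrictMonoOn ellK (Ico 0 1) := by
  intro a ha b hb hab
  have hab2 : a ^ 2 < b ^ 2 := pow_lt_pow_left₀ hab ha.1 two_ne_zero
  replace ha : a ^ 2 < 1 := pow_lt_one₀ ha.1 ha.2 two_ne_zero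
  replace hb : b ^ 2 < 1 := pow_lt_one₀ hb.1 hb.2 two_ne_zero
  have hpos := one_sub_sq_mul_sin_sq_pos hb
  refine integral_lt_integral_of_continuousOn_of_le_of_exists_lt (by positivity)
    (continuous_ellK_integrand ha).continuousOn (continuous_ellK_integrand hb).continuousOn
    (fun t _ => ?_) ⟨π / 2, ⟨by positivity, le_rfl⟩, ?_⟩
  · refine one_div_le_one_div_of_le (sqrt_pos.2 (hpos t)) (sqrt_le_sqrt ?_)
    nlinarith [mul_le_mul_of_nonneg_right hab2.le (sq_nonneg (sin t))]
  · refine one_div_lt_one_div_of_lt (sqrt_pos.2 (hpos _)) (sqrt_lt_sqrt (hpos _).le ?_)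
    simpa only [sin_pi_div_two, one_pow, mul_one, sub_lt_sub_iff_left] using hab2

lemma continuousOn_ellK : ContinuousOn ellK (Ioo (-1) 1) := by
  have hsq : ∀ κ : Ioo (-1 : ℝ) 1, (κ : ℝ) ^ 2 < 1 := fun κ =>
    (sq_lt_one_iff_abs_lt_one _).2 (abs_lt.2 κ.2)
  rw [continuousOn_iff_continuous_domRestrict]
  refine continuous_parametric_intervalIntegral_of_continuous'
    (continuous_const.div (by fun_prop) ?_) 0 (π / 2)
  exact fun p => (sqrt_pos.2 (one_sub_sq_mul_sin_sq_pos (hsq p.1) p.2)).ne'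

lemma continuous_one_div_sqrt_sq_add_sq {ε : ℝ} (hε : 0 < ε) (a : ℝ) :
    Continuous fun t : ℝ => 1 / √(ε ^ 2 + (a - t) ^ 2) :=
  continuous_const.div (by fun_prop) fun t => (sqrt_pos.2 (by positivity)).ne'

lemma integral_one_div_sqrt_sq_add_sq {ε : ℝ} (hε : 0 < ε) (a : ℝ) :
    ∫ t in (0 : ℝ)..a, 1 / √(ε ^ 2 + (a - t) ^ 2) = arsinh (a / ε) := by
  have hderiv : ∀ t : ℝ, HasDerivAt (fun s => -arsinh ((a - s) / ε))
      (1 / √(ε ^ 2 + (a - t) ^ 2)) t := fun t => by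
    have hinner : HasDerivAt (fun s : ℝ => (a - s) / ε) (-1 / ε) t := by
      simpa using ((hasDerivAt_id t).const_sub a).div_const ε
    refine hinner.arsinh.neg.congr_deriv ?_
    have hsqrt : √(1 + ((a - t) / ε) ^ 2) = √(ε ^ 2 + (a - t) ^ 2) / ε := by
      rw [show 1 + ((a - t) / ε) ^ 2 = (ε ^ 2 + (a - t) ^ 2) / ε ^ 2 by field_simp,
        sqrt_div' _ (by positivity), sqrt_sq hε.le]
    have : 0 < √(ε ^ 2 + (a - t) ^ 2) := sqrt_pos.2 (by positivity)
    rw [hsqrt, smul_eq_mul]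
    field_simp
  rw [integral_eq_sub_of_hasDerivAt (fun t _ => hderiv t)
    ((continuous_one_div_sqrt_sq_add_sq hε a).intervalIntegrable _ _)]
  simp

lemma arsinh_le_ellK {κ : ℝ} (hκ : κ ^ 2 < 1) :
    arsinh (π / 2 / √(1 - κ ^ 2)) ≤ ellK κ := by
  have hε : 0 < √(1 - κ ^ 2) := sqrt_pos.2 (by linarith)
  have hε2 : √(1 - κ ^ 2) ^ 2 = 1 - κ ^ 2 := sq_sqrt (by linarith)
  rw [← integral_one_div_sqrt_sq_add_sq hε, ellK]
  refine integral_mono_on (by positivity)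
    ((continuous_one_div_sqrt_sq_add_sq hε _).intervalIntegrable _ _)
    ((continuous_ellK_integrand hκ).intervalIntegrable _ _) fun t ht => ?_
  have hu : 0 ≤ π / 2 - t := by linarith [ht.2]
  have hcos : cos t ≤ π / 2 - t := by
    rw [← sin_pi_div_two_sub]
    exact sin_le hu
  have hcos0 : 0 ≤ cos t := by
    rw [← sin_pi_div_two_sub]
    exact sin_nonneg_of_nonneg_of_le_pi hu (by linarith [ht.1])
  refine one_div_le_one_div_of_le (sqrt_pos.2 (one_sub_sq_mul_sin_sq_pos hκ t))
    (sqrt_le_sqrt ?_)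
  rw [hε2]
  nlinarith [sin_sq_add_cos_sq t, mul_le_mul hcos hcos hcos0 hu,
    mul_le_of_le_one_left (sq_nonneg (cos t)) (by nlinarith : κ ^ 2 ≤ 1)]

lemma tendsto_arsinh_atTop : Tendsto arsinh atTop atTop :=
  tendsto_atTop_atTop_of_monotone arsinh_strictMono.monotone fun b =>
    ⟨sinh b, (arsinh_sinh b).ge⟩

lemma tendsto_ellK_nhdsLT_one : Tendsto ellK (𝓝[<] 1) atTop := by
  have hnear : ∀ᶠ κ in 𝓝[<] (1 : ℝ), κ ^ 2 < 1 := by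
    filter_upwards [Ioo_mem_nhdsLT (by norm_num : (-1 : ℝ) < 1)] with κ hκ
    nlinarith [hκ.1, hκ.2]
  have hk' : Tendsto (fun κ : ℝ => √(1 - κ ^ 2)) (𝓝[<] 1) (𝓝[>] 0) := by
    refine tendsto_nhdsWithin_iff.2 ⟨?_, hnear.mono fun κ hκ => sqrt_pos.2 (by linarith)⟩
    have : Continuous fun κ : ℝ => √(1 - κ ^ 2) := by fun_prop
    simpa using this.continuousAt.tendsto.mono_left (nhdsWithin_le_nhds (a := (1 : ℝ)))
  have harg := (tendsto_inv_nhdsGT_zero.comp hk').const_mul_atTop (by positivity : 0 < π / 2)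
  refine tendsto_atTop_mono' _ ?_ (tendsto_arsinh_atTop.comp harg)
  filter_upwards [hnear] with κ hκ
  exact arsinh_le_ellK hκ

lemma strictMonoOn_sqrt_one_add_sq_mul_ellK :
    StrictMonoOn (fun κ : ℝ => √(1 + κ ^ 2) * ellK κ) (Ico 0 1) := by
  intro a ha b hb hab
  have hb2 : b ^ 2 < 1 := pow_lt_one₀ hb.1 hb.2 two_ne_zero
  calc √(1 + a ^ 2) * ellK a < √(1 + a ^ 2) * ellK b :=
        mul_lt_mul_of_pos_left (ellK_strictMonoOn ha hb hab) (sqrt_pos.2 (by positivity))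
    _ ≤ √(1 + b ^ 2) * ellK b := by
        gcongr
        · exact (ellK_pos hb2).le
        · nlinarith [ha.1]

lemma tendsto_sqrt_one_add_sq_mul_ellK :
    Tendsto (fun κ : ℝ => √(1 + κ ^ 2) * ellK κ) (𝓝[<] 1) atTop := by
  refine tendsto_atTop_mono' _ ?_ tendsto_ellK_nhdsLT_one
  filter_upwards [tendsto_ellK_nhdsLT_one.eventually_ge_atTop 0] with κ hK
  exact le_mul_of_one_le_left hK (one_le_sqrt.2 (by nlinarith))

lemma exists_sqrt_one_add_sq_mul_ellK_eq {c : ℝ} (hc : π / 2 ≤ c) :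
    ∃ κ ∈ Ico (0 : ℝ) 1, √(1 + κ ^ 2) * ellK κ = c := by
  have hcont : ContinuousOn (fun κ : ℝ => √(1 + κ ^ 2) * ellK κ) (Ico 0 1) :=
    (by fun_prop : Continuous fun κ : ℝ => √(1 + κ ^ 2)).continuousOn.mul
      (continuousOn_ellK.mono fun κ hκ => ⟨by linarith [hκ.1], hκ.2⟩)
  have := right_nhdsWithin_Ico_neBot (zero_lt_one' ℝ)
  refine isPreconnected_Ico.intermediate_value_Ici (left_mem_Ico.2 one_pos)
    (l := 𝓝[Ico 0 1] 1) inf_le_right hcont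
    (tendsto_sqrt_one_add_sq_mul_ellK.mono_left (nhdsWithin_mono _ Ico_subset_Iio_self)) ?_
  simpa [ellK_zero] using hc

lemma eq_sq_div_sq_iff {a x γ : ℝ} (ha : 0 ≤ a) (hx : 0 < x) (hγ : 0 < γ) :
    γ = a ^ 2 / x ^ 2 ↔ x = a / √γ := by
  have hsγ : 0 < √γ := sqrt_pos.2 hγ
  rw [eq_div_iff (by positivity), ← sq_sqrt hγ.le, ← mul_pow, sq_sqrt hγ.le,
    pow_left_inj₀ (by positivity) ha (by norm_num), eq_div_iff hsγ.ne', mul_comm]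

lemma eq_pi_sq_div_iff {κ γ : ℝ} (hκ : κ ^ 2 < 1) (hγ : 0 < γ) :
    γ = π ^ 2 / (4 * ellK κ ^ 2 * (1 + κ ^ 2)) ↔ √(1 + κ ^ 2) * ellK κ = π / 2 / √γ := by
  have hform : π ^ 2 / (4 * ellK κ ^ 2 * (1 + κ ^ 2)) =
      (π / 2) ^ 2 / (√(1 + κ ^ 2) * ellK κ) ^ 2 := by
    rw [mul_pow, sq_sqrt (by positivity)]
    field_simp
    ring
  rw [hform]
  exact eq_sq_div_sq_iff (by positivity) (mul_pos (sqrt_pos.2 (by positivity)) (ellK_pos hκ)) hγ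

/-- `κ ↦ √(1+κ²) K(κ)` is strictly increasing on `[0,1)`, equals `π/2` at
`κ = 0`, tends to `+∞` as `κ → 1⁻`; hence for every `γ̃ ∈ (0,1]` there is a unique
`κ ∈ [0,1)` with `γ̃ = π²/(4K(κ)²(1+κ²))`. -/
theorem statement10 :
    StrictMonoOn (fun κ : ℝ => Real.sqrt (1 + κ^2) * ellK κ) (Set.Ico 0 1) ∧
    Real.sqrt (1 + (0:ℝ)^2) * ellK 0 = Real.pi / 2 ∧
    Filter.Tendsto (fun κ : ℝ => Real.sqrt (1 + κ^2) * ellK κ)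
      (nhdsWithin 1 (Set.Iio 1)) Filter.atTop ∧
    ∀ γt : ℝ, 0 < γt → γt ≤ 1 →
      ∃! κ : ℝ, κ ∈ Set.Ico (0:ℝ) 1 ∧
        γt = Real.pi^2 / (4 * ellK κ^2 * (1 + κ^2)) := by
  have hsq : ∀ κ ∈ Ico (0 : ℝ) 1, κ ^ 2 < 1 := fun κ hκ => pow_lt_one₀ hκ.1 hκ.2 two_ne_zero
  refine ⟨strictMonoOn_sqrt_one_add_sq_mul_ellK, by simp [ellK_zero],
    tendsto_sqrt_one_add_sq_mul_ellK, fun γ hγ0 hγ1 => ?_⟩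
  obtain ⟨κ, hκ, hκc⟩ := exists_sqrt_one_add_sq_mul_ellK_eq
    (le_div_self (by positivity) (sqrt_pos.2 hγ0) (sqrt_le_one.2 hγ1))
  refine ⟨κ, ⟨hκ, (eq_pi_sq_div_iff (hsq κ hκ) hγ0).2 hκc⟩, fun κ' ⟨hκ', heq⟩ => ?_⟩
  exact strictMonoOn_sqrt_one_add_sq_mul_ellK.injOn hκ' hκ
    (((eq_pi_sq_div_iff (hsq κ' hκ') hγ0).1 heq).trans hκc.symm)
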